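/- arXiv:1603.03466 — 3 statements merged into one kernel-verified Lean document; each statement's English description precedes it below -/
import Mathlib

section
/- Let 0 < α < mn, s > 1 with 1/s + 1/s' = 1 and 1 ≤ s' < mn/α, and let Ω be homogeneous of degree zero on ℝ^{mn} with Ω ∈ L^s(S^{mn-1}). Then there is a constant C > 0 such that for all locally integrable f₁,…,f_m on ℝⁿ and all x ∈ ℝⁿ, M_{Ω,α}^{(m)}(f₁,…,f_m)(x) ≤ C · [M_{αs'}^{(m)}(|f₁|^{s'},…,|f_m|^{s'})(x)]^{1/s'}. -/
open MeasureTheory ENNReal NNReal BigOperators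

noncomputable section

abbrev En (n : ℕ) : Type := EuclideanSpace ℝ (Fin n)

/-- `|y⃗| = |y₁| + ⋯ + |y_m|`. -/
def vnorm {m n : ℕ} (y : Fin m → En n) : ℝ := ∑ i, ‖y i‖

/-- Rough multi-sublinear fractional maximal operator `M_{Ω,β}^{(m)}`. -/
def MRmax (m n : ℕ) (Ω : (Fin m → En n) → ℝ) (β : ℝ)
    (f : Fin m → (En n → ℝ)) (x : En n) : ℝ≥0∞ :=
  ⨆ (r : ℝ) (_ : 0 < r),
    ENNReal.ofReal r ^ (β - (m * n : ℝ)) *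
      ∫⁻ y in {y : Fin m → En n | vnorm y < r},
        ENNReal.ofReal (|Ω y| * ∏ i, |f i (x - y i)|)

/-- Rough multilinear fractional integral `I_{Ω,α}^{(m)}` (Bochner integral). -/
def IRint (m n : ℕ) (Ω : (Fin m → En n) → ℝ) (α : ℝ)
    (f : Fin m → (En n → ℝ)) (x : En n) : ℝ :=
  ∫ y : Fin m → En n, (Ω y / vnorm y ^ ((m * n : ℝ) - α)) * ∏ i, f i (x - y i)

/-- Kenig–Stein multilinear fractional integral of the absolute values (lower integral). -/
def ILint (m n : ℕ) (α : ℝ) (f : Fin m → (En n → ℝ)) (x : En n) : ℝ≥0∞ :=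
  ∫⁻ y : Fin m → En n,
    ENNReal.ofReal (vnorm y ^ (α - (m * n : ℝ)) * ∏ i, |f i (x - y i)|)

/-- Homogeneity of degree zero. -/
def HomogZero {m n : ℕ} (Ω : (Fin m → En n) → ℝ) : Prop :=
  ∀ t : ℝ, 0 < t → ∀ y, Ω (t • y) = Ω y

/-- `Ω ∈ L^s(S^{mn-1})`, expressed (equivalently, for `Ω` homogeneous of degree zero)
as `s`-integrability on the unit ball of the norm `vnorm`. -/
def SphereLs (m n : ℕ) (s : ℝ) (Ω : (Fin m → En n) → ℝ) : Prop :=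
  (∫⁻ y in {y : Fin m → En n | vnorm y < 1}, ENNReal.ofReal (|Ω y| ^ s)) < ⊤

/-- Axis-parallel cubes in `ℝⁿ`. -/
def RCube {n : ℕ} (Q : Set (En n)) : Prop :=
  ∃ (a : En n) (h : ℝ), 0 < h ∧ Q = {x : En n | ∀ j, a j ≤ x j ∧ x j ≤ a j + h}

/-- Average of `w` over `Q`. -/
def cubeAvg {n : ℕ} (Q : Set (En n)) (w : En n → ℝ) : ℝ :=
  ((volume Q).toReal)⁻¹ * ∫ x in Q, w x

/-- Hölder conjugate exponent. -/
def rconj (P : ℝ) : ℝ := P / (P - 1)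

/-- Muckenhoupt–Wheeden class `A_{P,Q}` for one weight. -/
def MWclass (n : ℕ) (P Qe : ℝ) (w : En n → ℝ) : Prop :=
  ∃ C > 0, ∀ Q : Set (En n), RCube Q →
    (cubeAvg Q fun x => w x ^ Qe) ^ (1 / Qe) *
      (cubeAvg Q fun x => w x ^ (-(rconj P))) ^ (1 / rconj P) ≤ C

/-- Radial Muckenhoupt–Wheeden class `A_{P,Q}^β` for a pair of weights. -/
def RadialApq (n : ℕ) (P Qe β : ℝ) (u v : En n → ℝ) : Prop :=
  ∃ C > 0, ∀ Q : Set (En n), RCube Q →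
    (1 < P →
      (volume Q).toReal ^ (1 / Qe + β / n - 1 / P) * (cubeAvg Q u) ^ (1 / Qe) *
        (cubeAvg Q fun x => v x ^ (1 - rconj P)) ^ (1 / rconj P) ≤ C) ∧
    (P = 1 → ∀ᵐ x ∂(volume.restrict Q),
      (volume Q).toReal ^ (1 / Qe + β / n - 1) * (cubeAvg Q u) ^ (1 / Qe) ≤ C * v x)

/-- Two-weight `A_P` condition. -/
def PairAp (n : ℕ) (P : ℝ) (u v : En n → ℝ) : Prop :=
  ∃ C > 0, ∀ Q : Set (En n), RCube Q →
    (1 < P →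
      cubeAvg Q u * (cubeAvg Q fun x => v x ^ (1 - rconj P)) ^ (P - 1) ≤ C) ∧
    (P = 1 → ∀ᵐ x ∂(volume.restrict Q), cubeAvg Q u ≤ C * v x)

/-!
Hölder's inequality with exponents `s, s'` on the ball `{|y⃗| < r}` splits off
`(∫_{|y⃗|<r} |Ω|^s)^{1/s}`. Since `Ω` is homogeneous of degree zero, this integral scales as
`r^{mn}` times its value on the unit ball, and the resulting power `r^{mn/s}` combines with
`r^{α-mn}` into exactly the normalisation `(r^{αs'-mn})^{1/s'}` of `M_{αs'}`.
-/

lemma continuous_vnorm {m n : ℕ} : Continuous (vnorm : (Fin m → En n) → ℝ) :=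
  continuous_finsetSum _ fun i _ => (continuous_apply i).norm

lemma measurableSet_vnorm_lt {m n : ℕ} (r : ℝ) :
    MeasurableSet {y : Fin m → En n | vnorm y < r} :=
  (isOpen_lt continuous_vnorm continuous_const).measurableSet

lemma vnorm_smul {m n : ℕ} {c : ℝ} (hc : 0 ≤ c) (y : Fin m → En n) :
    vnorm (c • y) = c * vnorm y := by
  simp [vnorm, norm_smul, abs_of_nonneg hc, Finset.mul_sum]

lemma finrank_pi_En (m n : ℕ) : Module.finrank ℝ (Fin m → En n) = m * n := by
  simp [Module.finrank_pi_fintype]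

lemma setLIntegral_vnorm_lt_of_smul_invariant {m n : ℕ} {G : (Fin m → En n) → ℝ≥0∞}
    (hG : ∀ t : ℝ, 0 < t → ∀ y, G (t • y) = G y) {r : ℝ} (hr : 0 < r) :
    ∫⁻ y in {y | vnorm y < r}, G y =
      ENNReal.ofReal r ^ ((m : ℝ) * n) * ∫⁻ y in {y | vnorm y < 1}, G y := by
  set g := Set.indicator {y : Fin m → En n | vnorm y < 1} G
  have hg : ∀ y, g (r⁻¹ • y) = Set.indicator {y | vnorm y < r} G y := by
    intro y
    have hball : vnorm (r⁻¹ • y) < 1 ↔ vnorm y < r := by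
      rw [vnorm_smul (inv_nonneg.2 hr.le), inv_mul_eq_div, div_lt_one hr]
    simp only [g, Set.indicator, Set.mem_ofPred_eq, hball, hG r⁻¹ (inv_pos.2 hr)]
  calc ∫⁻ y in {y | vnorm y < r}, G y
      = ∫⁻ y, g (MeasurableEquiv.smul₀ r⁻¹ (inv_ne_zero hr.ne') y) := by
        rw [← lintegral_indicator (measurableSet_vnorm_lt r)]
        exact lintegral_congr fun y => (hg y).symm
    _ = ∫⁻ y, g y ∂(Measure.map (r⁻¹ • ·) volume) := (lintegral_map_equiv g _).symm
    _ = ENNReal.ofReal r ^ ((m : ℝ) * n) * ∫⁻ y in {y | vnorm y < 1}, G y := by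
        rw [Measure.map_addHaar_smul volume (inv_ne_zero hr.ne'), lintegral_smul_measure,
          lintegral_indicator (measurableSet_vnorm_lt 1), finrank_pi_En, inv_pow, inv_inv,
          abs_of_nonneg (by positivity), ENNReal.ofReal_pow hr.le, ← ENNReal.rpow_natCast,
          smul_eq_mul]
        norm_cast

lemma lintegral_ofReal_abs_mul_le {X : Type*} [MeasurableSpace X] (μ : Measure X) {p q : ℝ}
    (hpq : p.HolderConjugate q) {f g : X → ℝ} (hf : AEMeasurable f μ)
    (hg : AEMeasurable g μ) :
    ∫⁻ a, ENNReal.ofReal (|f a| * |g a|) ∂μ ≤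
      (∫⁻ a, ENNReal.ofReal (|f a| ^ p) ∂μ) ^ (1 / p) *
        (∫⁻ a, ENNReal.ofReal (|g a| ^ q) ∂μ) ^ (1 / q) := by
  simp_rw [ENNReal.ofReal_mul (abs_nonneg _),
    ← ENNReal.ofReal_rpow_of_nonneg (abs_nonneg _) hpq.nonneg,
    ← ENNReal.ofReal_rpow_of_nonneg (abs_nonneg _) hpq.symm.nonneg]
  exact ENNReal.lintegral_mul_le_Lp_mul_Lq μ hpq
    (ENNReal.measurable_ofReal.comp_aemeasurable hf.abs)
    (ENNReal.measurable_ofReal.comp_aemeasurable hg.abs)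

lemma aemeasurable_prod_abs_comp_sub {m n : ℕ} {f : Fin m → En n → ℝ}
    (hf : ∀ i, AEMeasurable (f i)) (x : En n) :
    AEMeasurable (fun y : Fin m → En n => ∏ i, |f i (x - y i)|) :=
  Finset.aemeasurable_fun_prod _ fun i _ =>
    ((hf i).comp_quasiMeasurePreserving
      ((Measure.measurePreserving_sub_left volume x).quasiMeasurePreserving.comp
        (Measure.quasiMeasurePreserving_eval _ i))).abs

lemma ofReal_rpow_regroup_of_holderConjugate {d α s s' : ℝ} (hconj : s.HolderConjugate s')
    {r : ℝ} (hr : 0 < r) (K B : ℝ≥0∞) :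
    ENNReal.ofReal r ^ (α - d) * ((ENNReal.ofReal r ^ d * K) ^ (1 / s) * B ^ (1 / s')) =
      K ^ (1 / s) * (ENNReal.ofReal r ^ (α * s' - d) * B) ^ (1 / s') := by
  have hexp : α - d + d * (1 / s) = (α * s' - d) * (1 / s') := by
    rw [one_div, ← hconj.symm.one_sub_inv]
    field_simp [hconj.symm.ne_zero]
    ring
  rw [ENNReal.mul_rpow_of_nonneg _ _ hconj.one_div_nonneg,
    ENNReal.mul_rpow_of_nonneg _ _ hconj.symm.one_div_nonneg, ← ENNReal.rpow_mul,
    ← ENNReal.rpow_mul, ← hexp,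
    ENNReal.rpow_add _ _ (ENNReal.ofReal_pos.2 hr).ne' ENNReal.ofReal_ne_top]
  ring

section MaximalBound

variable {m n : ℕ} {Ω : (Fin m → En n) → ℝ} {α s s' : ℝ} {f : Fin m → En n → ℝ}

lemma ofReal_rpow_mul_setLIntegral_le (hconj : s.HolderConjugate s') (hΩmeas : Measurable Ω)
    (hhom : HomogZero Ω) (hf : ∀ i, AEMeasurable (f i)) (x : En n) {r : ℝ} (hr : 0 < r) :
    ENNReal.ofReal r ^ (α - m * n) *
        ∫⁻ y in {y | vnorm y < r}, ENNReal.ofReal (|Ω y| * ∏ i, |f i (x - y i)|) ≤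
      (∫⁻ y in {y | vnorm y < 1}, ENNReal.ofReal (|Ω y| ^ s)) ^ (1 / s) *
        (ENNReal.ofReal r ^ (α * s' - m * n) *
          ∫⁻ y in {y | vnorm y < r},
            ENNReal.ofReal (|(1 : ℝ)| * ∏ i, abs (|f i (x - y i)| ^ s'))) ^ (1 / s') := by
  have hprod_abs : ∀ y : Fin m → En n, abs (∏ i, |f i (x - y i)|) = ∏ i, |f i (x - y i)| :=
    fun y => abs_of_nonneg (Finset.prod_nonneg fun i _ => abs_nonneg _)
  have hprod_rpow : ∀ y : Fin m → En n,
      (∏ i, |f i (x - y i)|) ^ s' = |(1 : ℝ)| * ∏ i, abs (|f i (x - y i)| ^ s') := fun y => by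
    rw [abs_one, one_mul, ← Real.finsetProd_rpow _ _ fun i _ => abs_nonneg _]
    simp_rw [abs_of_nonneg (Real.rpow_nonneg (abs_nonneg _) s')]
  have hball : ∫⁻ y in {y | vnorm y < r}, ENNReal.ofReal (|Ω y| ^ s) =
      ENNReal.ofReal r ^ ((m : ℝ) * n) *
        ∫⁻ y in {y | vnorm y < 1}, ENNReal.ofReal (|Ω y| ^ s) :=
    setLIntegral_vnorm_lt_of_smul_invariant (fun t ht y => by rw [hhom t ht y]) hr
  have hholder := lintegral_ofReal_abs_mul_le (volume.restrict {y | vnorm y < r}) hconj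
    hΩmeas.aemeasurable.restrict (aemeasurable_prod_abs_comp_sub hf x).restrict
  simp only [hprod_abs, hball, hprod_rpow] at hholder
  calc _ ≤ ENNReal.ofReal r ^ (α - m * n) * _ := by gcongr
    _ = _ := ofReal_rpow_regroup_of_holderConjugate hconj hr _ _

lemma MRmax_le_rpow_mul_MRmax_rpow (hconj : s.HolderConjugate s') (hΩmeas : Measurable Ω)
    (hhom : HomogZero Ω) (hf : ∀ i, AEMeasurable (f i)) (x : En n) :
    MRmax m n Ω α f x ≤
      (∫⁻ y in {y | vnorm y < 1}, ENNReal.ofReal (|Ω y| ^ s)) ^ (1 / s) *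
        MRmax m n (fun _ => 1) (α * s') (fun i z => |f i z| ^ s') x ^ (1 / s') := by
  refine iSup₂_le fun r hr =>
    (ofReal_rpow_mul_setLIntegral_le hconj hΩmeas hhom hf x hr).trans ?_
  have := hconj.symm.one_div_nonneg
  gcongr
  exact le_iSup₂ (f := fun r (_ : 0 < r) => ENNReal.ofReal r ^ (α * s' - m * n) *
    ∫⁻ y in {y | vnorm y < r}, ENNReal.ofReal (|(1 : ℝ)| * ∏ i, abs (|f i (x - y i)| ^ s')))
    r hr

end MaximalBound

theorem stmt0_general (m n : ℕ) (α s s' : ℝ) (hs : 1 < s) (hss' : 1 / s + 1 / s' = 1)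
    (Ω : (Fin m → En n) → ℝ) (hΩmeas : Measurable Ω)
    (hhom : HomogZero Ω) (hΩ : SphereLs m n s Ω) :
    ∃ C : ℝ≥0, 0 < C ∧ ∀ (f : Fin m → (En n → ℝ)),
      (∀ i, LocallyIntegrable (f i) volume) → ∀ x : En n,
      MRmax m n Ω α f x ≤
        C * (MRmax m n (fun _ => 1) (α * s') (fun i z => |f i z| ^ s') x) ^ (1 / s') := by
  have hconj : s.HolderConjugate s' :=
    Real.holderConjugate_iff.2 ⟨hs, by simpa only [one_div] using hss'⟩
  set K := ∫⁻ y in {y : Fin m → En n | vnorm y < 1}, ENNReal.ofReal (|Ω y| ^ s)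
  have hK : K ^ (1 / s) ≠ ⊤ := ENNReal.rpow_ne_top_of_nonneg hconj.one_div_nonneg hΩ.ne
  refine ⟨(K ^ (1 / s)).toNNReal + 1, by positivity, fun f hf x => ?_⟩
  calc MRmax m n Ω α f x
      ≤ K ^ (1 / s) * MRmax m n (fun _ => 1) (α * s') (fun i z => |f i z| ^ s') x ^ (1 / s') :=
        MRmax_le_rpow_mul_MRmax_rpow hconj hΩmeas hhom
          (fun i => (hf i).aestronglyMeasurable.aemeasurable) x
    _ ≤ _ := by
        gcongr
        rw [ENNReal.coe_add, ENNReal.coe_toNNReal hK]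
        exact le_self_add

/-- pointwise bound of the rough maximal operator by the smooth one. -/
theorem stmt0 (m n : ℕ) (hm : 1 ≤ m) (hn : 1 ≤ n) (α s s' : ℝ)
    (hα0 : 0 < α) (hα : α < m * n) (hs : 1 < s) (hss' : 1 / s + 1 / s' = 1)
    (hs'1 : 1 ≤ s') (hs' : s' < m * n / α)
    (Ω : (Fin m → En n) → ℝ) (hΩmeas : Measurable Ω)
    (hhom : HomogZero Ω) (hΩ : SphereLs m n s Ω) :
    ∃ C : ℝ≥0, 0 < C ∧ ∀ (f : Fin m → (En n → ℝ)),
      (∀ i, LocallyIntegrable (f i) volume) → ∀ x : En n,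
      MRmax m n Ω α f x ≤
        C * (MRmax m n (fun _ => 1) (α * s') (fun i z => |f i z| ^ s') x) ^ (1 / s') :=
  stmt0_general m n α s s' hs hss' Ω hΩmeas hhom hΩ
end
end

section
/- Let 0 < α < mn and let Ω be homogeneous of degree zero on ℝ^{mn} with Ω locally integrable. For any 0 < ε < min{α, mn − α} there exists a constant C > 0 such that for all f₁,…,f_m and all x ∈ ℝⁿ, |I_{Ω,α}^{(m)}(f⃗)(x)| ≤ C · [M_{Ω,α+ε}^{(m)}(f⃗)(x)]^{1/2} · [M_{Ω,α−ε}^{(m)}(f⃗)(x)]^{1/2}. -/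
open MeasureTheory ENNReal NNReal BigOperators

noncomputable section

/-!
On the dyadic shell `2 ^ (k - 1) r ≤ |y⃗| < 2 ^ k r` the kernel `|y⃗| ^ (α - mn)` is at most
`2 ^ (mn - α) (2 ^ k r) ^ (α - mn)`, while the integral of `|Ω| ∏ |fᵢ|` over the ball of radius
`2 ^ k r` is at most `(2 ^ k r) ^ (mn - β) M_β`. Taking `β = α + ε` on the outer shells
(`k ≥ 0`) and `β = α - ε` on the inner ones gives two geometric series, whence
`|I(x)| ≲ r ^ (-ε) M_{α+ε}(x) + r ^ ε M_{α-ε}(x)` for every `r > 0`. Choosing `r` to balance the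
two terms gives the geometric mean. The argument sees `|Ω| ∏ |fᵢ|` only through its integrals
over the balls `{|y⃗| < r}`, and works verbatim for any measure, gauge `ρ ≥ 0` and density `g`.
-/

lemma vnorm_nonneg {m n : ℕ} (y : Fin m → En n) : 0 ≤ vnorm y :=
  Finset.sum_nonneg fun _ _ => norm_nonneg _

lemma measurable_vnorm {m n : ℕ} : Measurable (vnorm (m := m) (n := n)) :=
  Finset.measurable_sum _ fun i _ => (measurable_pi_apply i).norm

lemma zpow_mul_rpow {a : ℝ} (ha : 0 ≤ a) (k : ℤ) {r : ℝ} (hr : 0 ≤ r) (t : ℝ) :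
    (a ^ k * r) ^ t = (a ^ t) ^ k * r ^ t := by
  rw [Real.mul_rpow (zpow_nonneg ha k) hr, ← Real.rpow_intCast, ← Real.rpow_mul ha,
    mul_comm (k : ℝ), Real.rpow_mul ha, Real.rpow_intCast]

lemma exists_rpow_neg_mul_add_rpow_mul_eq {a b ε : ℝ} (ha : 0 < a) (hb : 0 < b) (hε : ε ≠ 0) :
    ∃ r : ℝ, 0 < r ∧ r ^ (-ε) * a + r ^ ε * b = 2 * √a * √b := by
  have hsa := Real.sqrt_pos.2 ha
  have hsb := Real.sqrt_pos.2 hb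
  refine ⟨(√a / √b) ^ ε⁻¹, by positivity, ?_⟩
  rw [Real.rpow_neg (by positivity), Real.rpow_inv_rpow (by positivity) hε, inv_div]
  field_simp
  rw [Real.sq_sqrt ha.le, Real.sq_sqrt hb.le]
  ring

lemma exists_rpow_neg_mul_add_rpow_mul_le {A B : ℝ≥0∞} {ε : ℝ} (hε : ε ≠ 0)
    (hAB : A = 0 ↔ B = 0) :
    ∃ r : ℝ, 0 < r ∧ ENNReal.ofReal (r ^ (-ε)) * A + ENNReal.ofReal (r ^ ε) * B ≤
      2 * A ^ ((1 : ℝ) / 2) * B ^ ((1 : ℝ) / 2) := by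
  by_cases hA : A = 0
  · exact ⟨1, one_pos, by simp [hA, hAB.1 hA]⟩
  have hB : B ≠ 0 := hAB.not.1 hA
  by_cases htop : A = ⊤ ∨ B = ⊤
  · refine ⟨1, one_pos, le_of_le_of_eq le_top ?_⟩
    rcases htop with h | h <;> simp [h, hA, hB, ENNReal.rpow_eq_zero_iff]
  obtain ⟨hAt, hBt⟩ := not_or.1 htop
  obtain ⟨r, hr, hsum⟩ := exists_rpow_neg_mul_add_rpow_mul_eq
    (ENNReal.toReal_pos hA hAt) (ENNReal.toReal_pos hB hBt) hε
  refine ⟨r, hr, le_of_eq ?_⟩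
  rw [← ENNReal.ofReal_toReal hAt, ← ENNReal.ofReal_toReal hBt,
    ← ENNReal.ofReal_mul (by positivity), ← ENNReal.ofReal_mul (by positivity),
    ← ENNReal.ofReal_add (by positivity) (by positivity), hsum,
    ENNReal.ofReal_mul (by positivity), ENNReal.ofReal_mul zero_le_two, ENNReal.ofReal_ofNat,
    ENNReal.ofReal_rpow_of_nonneg ENNReal.toReal_nonneg (by norm_num),
    ENNReal.ofReal_rpow_of_nonneg ENNReal.toReal_nonneg (by norm_num),
    Real.sqrt_eq_rpow, Real.sqrt_eq_rpow]

lemma support_subset_iUnion_shell {X : Type*} {ρ : X → ℝ} {g : X → ℝ≥0∞}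
    (hρ : ∀ y, 0 ≤ ρ y) {α d : ℝ} (hαd : α ≠ d) {r : ℝ} (hr : 0 < r) :
    Function.support (fun y => ENNReal.ofReal (ρ y ^ (α - d)) * g y) ⊆
      ⋃ k : ℤ, {y | 2 ^ k * r / 2 ≤ ρ y ∧ ρ y < 2 ^ k * r} := by
  intro y hy
  have hpos : 0 < ρ y := by
    refine (hρ y).lt_of_ne fun h0 => hy ?_
    simp [← h0, Real.zero_rpow (sub_ne_zero.2 hαd)]
  obtain ⟨k, hk, hk'⟩ := exists_mem_Ico_zpow (div_pos hpos hr) one_lt_two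
  refine Set.mem_iUnion.2 ⟨k + 1, ?_, ?_⟩
  · rw [zpow_add_one₀ two_ne_zero, mul_right_comm, mul_div_cancel_right₀ _ two_ne_zero]
    exact (le_div_iff₀ hr).1 hk
  · exact (div_lt_iff₀ hr).1 hk'

section BallMaximal

variable {X : Type*} [MeasurableSpace X]

-- `MRmax m n Ω β f x` is the case `μ = volume`, `ρ = vnorm`, `d = m * n` of this.
def ballMaximal (μ : Measure X) (ρ : X → ℝ) (g : X → ℝ≥0∞) (d β : ℝ) : ℝ≥0∞ :=
  ⨆ (r : ℝ) (_ : 0 < r), ENNReal.ofReal r ^ (β - d) * ∫⁻ y in {y | ρ y < r}, g y ∂μ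

variable {μ : Measure X} {ρ : X → ℝ} {g : X → ℝ≥0∞}

lemma setLIntegral_lt_le_ballMaximal {r : ℝ} (hr : 0 < r) (d β : ℝ) :
    ∫⁻ y in {y | ρ y < r}, g y ∂μ ≤ ENNReal.ofReal (r ^ (d - β)) * ballMaximal μ ρ g d β := by
  have hball : ENNReal.ofReal r ^ (β - d) * ∫⁻ y in {y | ρ y < r}, g y ∂μ ≤
      ballMaximal μ ρ g d β :=
    le_iSup₂ (f := fun (r : ℝ) (_ : 0 < r) =>
      ENNReal.ofReal r ^ (β - d) * ∫⁻ y in {y | ρ y < r}, g y ∂μ) r hr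
  have hr' : ENNReal.ofReal r ≠ 0 := by simpa using hr
  rw [← ENNReal.ofReal_rpow_of_pos hr, ← neg_sub, ENNReal.rpow_neg, ← ENNReal.div_eq_inv_mul,
    ENNReal.le_div_iff_mul_le (by simp [ENNReal.rpow_eq_zero_iff, hr'])
      (by simp [ENNReal.rpow_eq_top_iff, hr']), mul_comm]
  exact hball

lemma ballMaximal_eq_zero_iff {d β : ℝ} :
    ballMaximal μ ρ g d β = 0 ↔ ∀ r : ℝ, 0 < r → ∫⁻ y in {y | ρ y < r}, g y ∂μ = 0 := by
  simp only [ballMaximal, ENNReal.iSup_eq_zero, mul_eq_zero, ENNReal.rpow_eq_zero_iff,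
    ENNReal.ofReal_eq_zero, ENNReal.ofReal_ne_top, false_and, or_false]
  exact forall₂_congr fun r hr => by simp [hr.not_ge]

lemma setLIntegral_rpow_mul_shell_le (hρ : Measurable ρ) {α d : ℝ} (hαd : α ≤ d) {s : ℝ}
    (hs : 0 < s) (β : ℝ) :
    ∫⁻ y in {y | s / 2 ≤ ρ y ∧ ρ y < s}, ENNReal.ofReal (ρ y ^ (α - d)) * g y ∂μ ≤
      ENNReal.ofReal (2 ^ (d - α) * s ^ (α - β)) * ballMaximal μ ρ g d β := by
  have hshell : MeasurableSet {y | s / 2 ≤ ρ y ∧ ρ y < s} :=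
    (measurableSet_le measurable_const hρ).inter (measurableSet_lt hρ measurable_const)
  have hcoeff : (s / 2) ^ (α - d) = 2 ^ (d - α) * s ^ (α - d) := by
    rw [Real.div_rpow hs.le zero_le_two, div_eq_mul_inv, ← Real.rpow_neg zero_le_two, neg_sub,
      mul_comm]
  calc ∫⁻ y in {y | s / 2 ≤ ρ y ∧ ρ y < s}, ENNReal.ofReal (ρ y ^ (α - d)) * g y ∂μ
      ≤ ∫⁻ y in {y | s / 2 ≤ ρ y ∧ ρ y < s},
          ENNReal.ofReal (2 ^ (d - α) * s ^ (α - d)) * g y ∂μ :=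
        setLIntegral_mono' hshell fun y hy => mul_le_mul_left (ENNReal.ofReal_le_ofReal
          (hcoeff ▸ Real.rpow_le_rpow_of_nonpos (by positivity) hy.1 (sub_nonpos.2 hαd))) _
    _ ≤ ENNReal.ofReal (2 ^ (d - α) * s ^ (α - d)) * ∫⁻ y in {y | ρ y < s}, g y ∂μ := by
        rw [lintegral_const_mul' _ _ ENNReal.ofReal_ne_top]
        exact mul_le_mul_right (lintegral_mono_set fun y hy => hy.2) _
    _ ≤ ENNReal.ofReal (2 ^ (d - α) * s ^ (α - d)) *
          (ENNReal.ofReal (s ^ (d - β)) * ballMaximal μ ρ g d β) :=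
        mul_le_mul_right (setLIntegral_lt_le_ballMaximal hs d β) _
    _ = ENNReal.ofReal (2 ^ (d - α) * s ^ (α - β)) * ballMaximal μ ρ g d β := by
        rw [← mul_assoc, ← ENNReal.ofReal_mul (by positivity), mul_assoc,
          ← Real.rpow_add hs, sub_add_sub_cancel]

lemma lintegral_rpow_mul_le_add (hρ : Measurable ρ) (hρ0 : ∀ y, 0 ≤ ρ y) {α d ε : ℝ}
    (hαd : α < d) (hε : 0 < ε) {r : ℝ} (hr : 0 < r) :
    ∫⁻ y, ENNReal.ofReal (ρ y ^ (α - d)) * g y ∂μ ≤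
      ENNReal.ofReal (2 ^ (d - α) / (1 - 2 ^ (-ε))) *
        (ENNReal.ofReal (r ^ (-ε)) * ballMaximal μ ρ g d (α + ε) +
          ENNReal.ofReal (r ^ ε) * ballMaximal μ ρ g d (α - ε)) := by
  set q : ℝ := 2 ^ (-ε)
  have hq0 : 0 ≤ q := by positivity
  have hq1 : q < 1 := Real.rpow_lt_one_of_one_lt_of_neg one_lt_two (neg_neg_of_pos hε)
  set F := fun y => ENNReal.ofReal (ρ y ^ (α - d)) * g y
  set shell := fun k : ℤ => {y | 2 ^ k * r / 2 ≤ ρ y ∧ ρ y < 2 ^ k * r}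
  have hshell (k : ℤ) (β : ℝ) : ∫⁻ y in shell k, F y ∂μ ≤
      ENNReal.ofReal (2 ^ (d - α) * (2 ^ k * r) ^ (α - β)) * ballMaximal μ ρ g d β :=
    setLIntegral_rpow_mul_shell_le hρ hαd.le (by positivity) β
  have houter (n : ℕ) : ∫⁻ y in shell n, F y ∂μ ≤ ENNReal.ofReal (2 ^ (d - α) * q ^ n) *
      (ENNReal.ofReal (r ^ (-ε)) * ballMaximal μ ρ g d (α + ε)) := by
    refine (hshell n (α + ε)).trans (le_of_eq ?_)
    rw [sub_add_cancel_left, zpow_mul_rpow zero_le_two _ hr.le, zpow_natCast, ← mul_assoc,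
      ENNReal.ofReal_mul (by positivity), mul_assoc]
  have hinner (n : ℕ) : ∫⁻ y in shell (-(n + 1)), F y ∂μ ≤
      ENNReal.ofReal (2 ^ (d - α) * q ^ n) *
        (ENNReal.ofReal (r ^ ε) * ballMaximal μ ρ g d (α - ε)) := by
    refine (hshell _ (α - ε)).trans ?_
    have hpow : ((2 : ℝ) ^ ε) ^ (-((n : ℤ) + 1)) = q ^ (n + 1) := by
      rw [show q = (2 ^ ε)⁻¹ from Real.rpow_neg zero_le_two ε, inv_pow, zpow_neg]
      norm_cast
    rw [_root_.sub_sub_cancel, zpow_mul_rpow zero_le_two _ hr.le, hpow, ← mul_assoc,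
      ENNReal.ofReal_mul (by positivity), mul_assoc]
    exact mul_le_mul_left (ENNReal.ofReal_le_ofReal (mul_le_mul_of_nonneg_left
      (pow_le_pow_of_le_one hq0 hq1.le n.le_succ) (by positivity))) _
  have hgeom : ∑' n : ℕ, ENNReal.ofReal (2 ^ (d - α) * q ^ n) =
      ENNReal.ofReal (2 ^ (d - α) / (1 - q)) := by
    rw [← ENNReal.ofReal_tsum_of_nonneg (fun n => by positivity)
      ((summable_geometric_of_lt_one hq0 hq1).mul_left _), _root_.tsum_mul_left,
      tsum_geometric_of_lt_one hq0 hq1, div_eq_mul_inv]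
  calc ∫⁻ y, F y ∂μ = ∫⁻ y in ⋃ k, shell k, F y ∂μ :=
        (setLIntegral_eq_of_support_subset (support_subset_iUnion_shell hρ0 hαd.ne hr)).symm
    _ ≤ ∑' k, ∫⁻ y in shell k, F y ∂μ := lintegral_iUnion_le _ _
    _ = ∑' n : ℕ, ∫⁻ y in shell n, F y ∂μ + ∑' n : ℕ, ∫⁻ y in shell (-(n + 1)), F y ∂μ :=
        tsum_of_nat_of_neg_add_one ENNReal.summable ENNReal.summable
    _ ≤ _ := by
        refine (add_le_add (ENNReal.tsum_le_tsum houter) (ENNReal.tsum_le_tsum hinner)).trans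
          (le_of_eq ?_)
        rw [ENNReal.tsum_mul_right, ENNReal.tsum_mul_right, hgeom, mul_add]

theorem lintegral_rpow_mul_le_mul_rpow_half (hρ : Measurable ρ) (hρ0 : ∀ y, 0 ≤ ρ y)
    {α d ε : ℝ} (hαd : α < d) (hε : 0 < ε) :
    ∫⁻ y, ENNReal.ofReal (ρ y ^ (α - d)) * g y ∂μ ≤
      ENNReal.ofReal (2 * (2 ^ (d - α) / (1 - 2 ^ (-ε)))) *
        ballMaximal μ ρ g d (α + ε) ^ ((1 : ℝ) / 2) *
          ballMaximal μ ρ g d (α - ε) ^ ((1 : ℝ) / 2) := by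
  obtain ⟨r, hr, hopt⟩ := exists_rpow_neg_mul_add_rpow_mul_le hε.ne'
    (ballMaximal_eq_zero_iff.trans ballMaximal_eq_zero_iff.symm :
      ballMaximal μ ρ g d (α + ε) = 0 ↔ ballMaximal μ ρ g d (α - ε) = 0)
  calc ∫⁻ y, ENNReal.ofReal (ρ y ^ (α - d)) * g y ∂μ
      ≤ ENNReal.ofReal (2 ^ (d - α) / (1 - 2 ^ (-ε))) *
          (ENNReal.ofReal (r ^ (-ε)) * ballMaximal μ ρ g d (α + ε) +
            ENNReal.ofReal (r ^ ε) * ballMaximal μ ρ g d (α - ε)) :=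
        lintegral_rpow_mul_le_add hρ hρ0 hαd hε hr
    _ ≤ ENNReal.ofReal (2 ^ (d - α) / (1 - 2 ^ (-ε))) *
          (2 * ballMaximal μ ρ g d (α + ε) ^ ((1 : ℝ) / 2) *
            ballMaximal μ ρ g d (α - ε) ^ ((1 : ℝ) / 2)) :=
        mul_le_mul_right hopt _
    _ = _ := by
        rw [ENNReal.ofReal_mul zero_le_two, ENNReal.ofReal_ofNat]
        ring

end BallMaximal

lemma ofReal_abs_IRint_le (m n : ℕ) (Ω : (Fin m → En n) → ℝ) (α : ℝ)
    (f : Fin m → (En n → ℝ)) (x : En n) :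
    ENNReal.ofReal |IRint m n Ω α f x| ≤
      ∫⁻ y, ENNReal.ofReal (vnorm y ^ (α - m * n)) *
        ENNReal.ofReal (|Ω y| * ∏ i, |f i (x - y i)|) := by
  calc ENNReal.ofReal |IRint m n Ω α f x| = ‖IRint m n Ω α f x‖ₑ :=
        (Real.enorm_eq_ofReal_abs _).symm
    _ ≤ ∫⁻ y, ‖Ω y / vnorm y ^ ((m * n : ℝ) - α) * ∏ i, f i (x - y i)‖ₑ :=
        enorm_integral_le_lintegral_enorm _
    _ = _ := lintegral_congr fun y => by
        rw [Real.enorm_eq_ofReal_abs, ← ENNReal.ofReal_mul (Real.rpow_nonneg (vnorm_nonneg y) _),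
          abs_mul, abs_div, Finset.abs_prod, abs_of_nonneg (Real.rpow_nonneg (vnorm_nonneg y) _),
          div_eq_mul_inv, ← Real.rpow_neg (vnorm_nonneg y), neg_sub]
        congr 1
        ring

theorem stmt1_general (m n : ℕ) (α ε : ℝ)
    (hα : α < m * n) (hε0 : 0 < ε)
    (Ω : (Fin m → En n) → ℝ) :
    ∃ C : ℝ≥0, 0 < C ∧ ∀ (f : Fin m → (En n → ℝ)) (x : En n),
      ENNReal.ofReal |IRint m n Ω α f x| ≤
        C * (MRmax m n Ω (α + ε) f x) ^ ((1 : ℝ) / 2) *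
          (MRmax m n Ω (α - ε) f x) ^ ((1 : ℝ) / 2) := by
  have hq : (2 : ℝ) ^ (-ε) < 1 :=
    Real.rpow_lt_one_of_one_lt_of_neg one_lt_two (neg_neg_of_pos hε0)
  refine ⟨Real.toNNReal (2 * (2 ^ ((m * n : ℝ) - α) / (1 - 2 ^ (-ε)))),
    Real.toNNReal_pos.2 (by have := sub_pos.2 hq; positivity), fun f x => ?_⟩
  exact (ofReal_abs_IRint_le m n Ω α f x).trans
    (lintegral_rpow_mul_le_mul_rpow_half measurable_vnorm vnorm_nonneg hα hε0)

/-- Welland's pointwise inequality for the rough multilinear fractional integral. -/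
theorem stmt1 (m n : ℕ) (hm : 1 ≤ m) (hn : 1 ≤ n) (α ε : ℝ)
    (hα0 : 0 < α) (hα : α < m * n) (hε0 : 0 < ε) (hε : ε < min α (m * n - α))
    (Ω : (Fin m → En n) → ℝ) (hΩmeas : Measurable Ω)
    (hΩloc : LocallyIntegrable Ω volume) (hhom : HomogZero Ω) :
    ∃ C : ℝ≥0, 0 < C ∧ ∀ (f : Fin m → (En n → ℝ)) (x : En n),
      ENNReal.ofReal |IRint m n Ω α f x| ≤
        C * (MRmax m n Ω (α + ε) f x) ^ ((1 : ℝ) / 2) *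
          (MRmax m n Ω (α - ε) f x) ^ ((1 : ℝ) / 2) :=
  stmt1_general m n α ε hα hε0 Ω
end
end

section
/- Let 0 < α < mn, δ > 0, and Ω locally integrable and homogeneous of degree zero on ℝ^{mn}. For any 0 < ε < mn − α and any x ∈ ℝⁿ, the 'outer part' satisfies ∫_{|y⃗|>δ} |Ω(y⃗)|/|y⃗|^{mn−α} ∏_{i=1}^m |f_i(x−y_i)| dy⃗ ≤ C δ^{-ε} M_{Ω,α+ε}^{(m)}(f⃗)(x), with C depending only on m, n, α, ε. -/
open MeasureTheory ENNReal NNReal BigOperators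

noncomputable section

/-!
Split `{δ < |y⃗|}` into the dyadic shells `2ʲδ ≤ |y⃗| < 2ʲ⁺¹δ`. On the `j`-th shell the kernel
`|y⃗|^{α-mn}` is at most `(2ʲδ)^{α-mn}`, and the integral of `|Ω| ∏ |fᵢ|` over the ball of radius
`2ʲ⁺¹δ` is at most `(2ʲ⁺¹δ)^{mn-α-ε}` times the maximal function `M_{Ω,α+ε}`. The product of the two
radii powers is `2^{mn-α-ε} δ^{-ε} (2^{-ε})ʲ`, and the geometric series in `j` converges since `ε > 0`.
-/

section DyadicShells

variable {X : Type*} (ρ : X → ℝ)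

def dyadicShell (δ : ℝ) (j : ℕ) : Set X :=
  ρ ⁻¹' Set.Ico (2 ^ j * δ) (2 ^ (j + 1) * δ)

theorem setOf_lt_subset_iUnion_dyadicShell {δ : ℝ} (hδ : 0 < δ) :
    {y | δ < ρ y} ⊆ ⋃ j, dyadicShell ρ δ j := by
  intro y hy
  obtain ⟨j, hj, hj'⟩ := exists_nat_pow_near ((one_le_div hδ).2 (le_of_lt hy)) one_lt_two
  exact Set.mem_iUnion.2 ⟨j, (le_div_iff₀ hδ).1 hj, (div_lt_iff₀ hδ).1 hj'⟩

variable [MeasurableSpace X] (μ : Measure X) (g : X → ℝ≥0∞)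

def radialMaximal (γ : ℝ) : ℝ≥0∞ :=
  ⨆ (r : ℝ) (_ : 0 < r), ENNReal.ofReal r ^ (-γ) * ∫⁻ y in {y | ρ y < r}, g y ∂μ

theorem setLIntegral_lt_le_rpow_mul_radialMaximal (γ : ℝ) {r : ℝ} (hr : 0 < r) :
    ∫⁻ y in {y | ρ y < r}, g y ∂μ ≤ ENNReal.ofReal (r ^ γ) * radialMaximal ρ μ g γ := by
  calc ∫⁻ y in {y | ρ y < r}, g y ∂μ
      = ENNReal.ofReal (r ^ γ) *
          (ENNReal.ofReal r ^ (-γ) * ∫⁻ y in {y | ρ y < r}, g y ∂μ) := by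
        rw [← mul_assoc, ENNReal.ofReal_rpow_of_pos hr, ← ENNReal.ofReal_mul (by positivity),
          ← Real.rpow_add hr, add_neg_cancel, Real.rpow_zero, ENNReal.ofReal_one, one_mul]
    _ ≤ ENNReal.ofReal (r ^ γ) * radialMaximal ρ μ g γ := by
        gcongr
        exact le_iSup₂ (f := fun r (_ : 0 < r) =>
          ENNReal.ofReal r ^ (-γ) * ∫⁻ y in {y | ρ y < r}, g y ∂μ) r hr

theorem dyadic_rpow_mul_rpow {δ : ℝ} (hδ : 0 < δ) (s ε : ℝ) (j : ℕ) :
    (2 ^ j * δ) ^ (-s) * (2 ^ (j + 1) * δ) ^ (s - ε) =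
      2 ^ (s - ε) * δ ^ (-ε) * ((2 : ℝ) ^ (-ε)) ^ j := by
  rw [Real.mul_rpow (by positivity) hδ.le, Real.mul_rpow (by positivity) hδ.le,
    ← Real.rpow_natCast, ← Real.rpow_natCast, ← Real.rpow_natCast, ← Real.rpow_mul zero_le_two,
    ← Real.rpow_mul zero_le_two, ← Real.rpow_mul zero_le_two]
  calc 2 ^ (j * -s) * δ ^ (-s) * (2 ^ ((j + 1 : ℕ) * (s - ε)) * δ ^ (s - ε))
      = (2 : ℝ) ^ (j * -s + (j + 1 : ℕ) * (s - ε)) * δ ^ (-s + (s - ε)) := by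
        rw [Real.rpow_add two_pos, Real.rpow_add hδ]
        ring
    _ = 2 ^ ((s - ε) + -ε * j) * δ ^ (-ε) := by
        congr 2 <;> push_cast <;> ring
    _ = 2 ^ (s - ε) * δ ^ (-ε) * 2 ^ (-ε * j) := by
        rw [Real.rpow_add two_pos]
        ring

theorem setLIntegral_dyadicShell_le (hρ : Measurable ρ) {s : ℝ} (hs : 0 ≤ s) (ε : ℝ)
    {δ : ℝ} (hδ : 0 < δ) (j : ℕ) :
    ∫⁻ y in dyadicShell ρ δ j, ENNReal.ofReal (ρ y ^ (-s)) * g y ∂μ ≤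
      ENNReal.ofReal (2 ^ (s - ε) * δ ^ (-ε) * ((2 : ℝ) ^ (-ε)) ^ j) *
        radialMaximal ρ μ g (s - ε) := by
  have hshell : 0 < (2 : ℝ) ^ j * δ := by positivity
  calc ∫⁻ y in dyadicShell ρ δ j, ENNReal.ofReal (ρ y ^ (-s)) * g y ∂μ
      ≤ ∫⁻ y in dyadicShell ρ δ j, ENNReal.ofReal ((2 ^ j * δ) ^ (-s)) * g y ∂μ := by
        refine setLIntegral_mono' (hρ measurableSet_Ico) fun y hy => ?_
        gcongr ENNReal.ofReal ?_ * _
        exact Real.rpow_le_rpow_of_nonpos hshell hy.1 (neg_nonpos.2 hs)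
    _ = ENNReal.ofReal ((2 ^ j * δ) ^ (-s)) * ∫⁻ y in dyadicShell ρ δ j, g y ∂μ :=
        lintegral_const_mul' _ _ ofReal_ne_top
    _ ≤ ENNReal.ofReal ((2 ^ j * δ) ^ (-s)) * ∫⁻ y in {y | ρ y < 2 ^ (j + 1) * δ}, g y ∂μ := by
        gcongr
        exact fun y hy => hy.2
    _ ≤ ENNReal.ofReal ((2 ^ j * δ) ^ (-s)) *
          (ENNReal.ofReal ((2 ^ (j + 1) * δ) ^ (s - ε)) * radialMaximal ρ μ g (s - ε)) := by
        gcongr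
        exact setLIntegral_lt_le_rpow_mul_radialMaximal ρ μ g _ (by positivity)
    _ = _ := by
        rw [← mul_assoc, ← ENNReal.ofReal_mul (by positivity), dyadic_rpow_mul_rpow hδ]

theorem ENNReal.tsum_ofReal_mul_geometric {A q : ℝ} (hA : 0 ≤ A) (hq : 0 ≤ q) (hq' : q < 1) :
    ∑' j : ℕ, ENNReal.ofReal (A * q ^ j) = ENNReal.ofReal (A / (1 - q)) := by
  rw [← ENNReal.ofReal_tsum_of_nonneg (fun j => by positivity)
    ((summable_geometric_of_lt_one hq hq').mul_left A), _root_.tsum_mul_left,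
    tsum_geometric_of_lt_one hq hq', div_eq_mul_inv]

theorem setLIntegral_gt_rpow_neg_mul_le_radialMaximal (hρ : Measurable ρ) {s ε : ℝ}
    (hs : 0 ≤ s) (hε : 0 < ε) {δ : ℝ} (hδ : 0 < δ) :
    ∫⁻ y in {y | δ < ρ y}, ENNReal.ofReal (ρ y ^ (-s)) * g y ∂μ ≤
      ENNReal.ofReal (2 ^ (s - ε) / (1 - 2 ^ (-ε)) * δ ^ (-ε)) *
        radialMaximal ρ μ g (s - ε) := by
  have hq : (2 : ℝ) ^ (-ε) < 1 := Real.rpow_lt_one_of_one_lt_of_neg one_lt_two (neg_neg_of_pos hε)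
  calc ∫⁻ y in {y | δ < ρ y}, ENNReal.ofReal (ρ y ^ (-s)) * g y ∂μ
      ≤ ∫⁻ y in ⋃ j, dyadicShell ρ δ j, ENNReal.ofReal (ρ y ^ (-s)) * g y ∂μ :=
        lintegral_mono_set (setOf_lt_subset_iUnion_dyadicShell ρ hδ)
    _ ≤ ∑' j, ∫⁻ y in dyadicShell ρ δ j, ENNReal.ofReal (ρ y ^ (-s)) * g y ∂μ :=
        lintegral_iUnion_le _ _
    _ ≤ ∑' j : ℕ, ENNReal.ofReal (2 ^ (s - ε) * δ ^ (-ε) * ((2 : ℝ) ^ (-ε)) ^ j) *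
          radialMaximal ρ μ g (s - ε) :=
        ENNReal.tsum_le_tsum fun j => setLIntegral_dyadicShell_le ρ μ g hρ hs ε hδ j
    _ = _ := by
        rw [ENNReal.tsum_mul_right,
          ENNReal.tsum_ofReal_mul_geometric (by positivity) (by positivity) hq, mul_div_right_comm]

end DyadicShells

theorem stmt17_general (m n : ℕ) (α ε : ℝ)
    (hα : α < m * n) (hε0 : 0 < ε)
    (Ω : (Fin m → En n) → ℝ) :
    ∃ C : ℝ, 0 < C ∧ ∀ δ : ℝ, 0 < δ → ∀ (f : Fin m → (En n → ℝ)) (x : En n),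
      (∫⁻ y in {y : Fin m → En n | δ < vnorm y},
          ENNReal.ofReal (vnorm y ^ (α - (m * n : ℝ)) * |Ω y| * ∏ i, |f i (x - y i)|)) ≤
        ENNReal.ofReal (C * δ ^ (-ε)) * MRmax m n Ω (α + ε) f x := by
  have hq : (2 : ℝ) ^ (-ε) < 1 := Real.rpow_lt_one_of_one_lt_of_neg one_lt_two (neg_neg_of_pos hε0)
  refine ⟨2 ^ ((m * n : ℝ) - α - ε) / (1 - 2 ^ (-ε)), div_pos (by positivity) (by linarith),
    fun δ hδ f x => ?_⟩
  have hvnorm : Measurable (vnorm : (Fin m → En n) → ℝ) :=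
    Continuous.measurable (by unfold vnorm; fun_prop)
  convert setLIntegral_gt_rpow_neg_mul_le_radialMaximal vnorm volume
    (fun y => ENNReal.ofReal (|Ω y| * ∏ i, |f i (x - y i)|)) hvnorm (sub_nonneg.2 hα.le) hε0 hδ
    using 2
  · ext y
    rw [neg_sub, mul_assoc]
    exact ENNReal.ofReal_mul (Real.rpow_nonneg (Finset.sum_nonneg fun i _ => norm_nonneg (y i)) _)
  · simp only [MRmax, radialMaximal]
    congr! 5
    ring

/-- dyadic-shell estimate for the outer part of the rough integral. -/
theorem stmt17 (m n : ℕ) (hm : 1 ≤ m) (hn : 1 ≤ n) (α ε : ℝ)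
    (hα0 : 0 < α) (hα : α < m * n) (hε0 : 0 < ε) (hε : ε < m * n - α)
    (Ω : (Fin m → En n) → ℝ) (hΩmeas : Measurable Ω)
    (hΩloc : LocallyIntegrable Ω volume) (hhom : HomogZero Ω) :
    ∃ C : ℝ, 0 < C ∧ ∀ δ : ℝ, 0 < δ → ∀ (f : Fin m → (En n → ℝ)) (x : En n),
      (∫⁻ y in {y : Fin m → En n | δ < vnorm y},
          ENNReal.ofReal (vnorm y ^ (α - (m * n : ℝ)) * |Ω y| * ∏ i, |f i (x - y i)|)) ≤
        ENNReal.ofReal (C * δ ^ (-ε)) * MRmax m n Ω (α + ε) f x :=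
  stmt17_general m n α ε hα hε0 Ω
end
end
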